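/- arXiv:1310.8089 — 2 statements merged into one kernel-verified Lean document; each statement's English description precedes it below -/
import Mathlib

section
/- The partial matching (A, B, C, m) produced by Algorithm 2 is acyclic: the modified Hasse diagram of S, obtained from the Hasse diagram by reversing edges (m(σ), σ) for σ ∈ A, contains no nontrivial directed cycle. -/
open Classical in
/-- The lower link of a vertex `v` in the simplicial complex `K` with respect to the
vertex map `f : V → ℝ^k`: the simplices `τ` with `v * τ ∈ K` and `f w ⪵ f v` for every
vertex `w` of `τ` (⪵ being the strict componentwise order). -/
noncomputable def lowerLink {V : Type*} [DecidableEq V] {k : ℕ}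
    (K : Finset (Finset V)) (f : V → Fin k → ℝ) (v : V) : Finset (Finset V) :=
  K.filter fun τ => v ∉ τ ∧ insert v τ ∈ K ∧ ∀ w ∈ τ, f w ≤ f v ∧ f w ≠ f v

theorem lowerLink_card_lt {V : Type*} [DecidableEq V] {k : ℕ}
    (K : Finset (Finset V)) (f : V → Fin k → ℝ) (v : V)
    (h : (lowerLink K f v).Nonempty) : (lowerLink K f v).card < K.card := by
  classical
  have hsub : lowerLink K f v ⊆ K := by
    simp [lowerLink]
  obtain ⟨τ, hτ⟩ := h
  have hmem : τ ∈ K ∧ v ∉ τ ∧ insert v τ ∈ K ∧ ∀ w ∈ τ, f w ≤ f v ∧ f w ≠ f v := by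
    simpa [lowerLink] using hτ
  apply Finset.card_lt_card
  rw [Finset.ssubset_iff_of_subset hsub]
  refine ⟨insert v τ, hmem.2.2.1, fun hc => ?_⟩
  have hvc : v ∉ insert v τ := by
    simp only [lowerLink, Finset.mem_filter] at hc
    exact hc.2.1
  exact hvc (Finset.mem_insert_self v τ)

/-- The output of the matching algorithm (Algorithm 2): the lists `A`, `B` of matched
simplices and the matching map `m : A → B`. -/
structure MatchOut (V : Type*) [DecidableEq V] where
  A : Finset (Finset V)
  B : Finset (Finset V)
  m : Finset V → Finset V

open Classical in
/-- Algorithm 2 (the recursive lower-link matching algorithm). For every vertex `v` of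
`K` whose lower link is nonempty: recursively partition the lower link, pick the
vertex `w₀` of the critical part of the lower link with `f`-value minimal w.r.t. ⪵
and smallest index `I`, match `v` with the edge `{v, w₀}`, and match `v * σ` with
`v * m' σ` for every `σ` matched in the lower link. All other simplices are critical,
i.e. the critical set is `C = K \ (A ∪ B)`. -/
noncomputable def algMatch {V : Type*} [DecidableEq V] [Fintype V] {k : ℕ}
    (f : V → Fin k → ℝ) (I : V → ℕ) (K : Finset (Finset V)) : MatchOut V :=
  let sub : V → MatchOut V := fun v =>
    if h : (lowerLink K f v).Nonempty then algMatch f I (lowerLink K f v)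
    else ⟨∅, ∅, fun _ => ∅⟩
  let w0 : V → V := fun v =>
    let o := sub v
    let C' := lowerLink K f v \ (o.A ∪ o.B)
    let C0 : Finset V := Finset.univ.filter fun w => ({w} : Finset V) ∈ C'
    let D' := C0.filter fun w => ∀ u ∈ C0, ¬(f u ≤ f w ∧ f u ≠ f w)
    if hD : D'.Nonempty then (Finset.exists_min_image D' I hD).choose else v
  let Av : Finset V := Finset.univ.filter fun v =>
    ({v} : Finset V) ∈ K ∧ (lowerLink K f v).Nonempty
  ⟨Av.image (fun v => ({v} : Finset V)) ∪
      Av.biUnion (fun v => ((sub v).A).image fun σ => insert v σ),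
    Av.image (fun v => ({v, w0 v} : Finset V)) ∪
      Av.biUnion (fun v => ((sub v).A).image fun σ => insert v ((sub v).m σ)),
    fun τ =>
      if hτ : τ.Nonempty then
        let v := (Finset.exists_max_image τ I hτ).choose
        if τ = {v} then {v, w0 v}
        else insert v ((sub v).m (τ.erase v))
      else ∅⟩
termination_by K.card
decreasing_by exact lowerLink_card_lt K f _ h

/-!
Call the vertex of `σ` with the largest index `I` its top vertex. Algorithm 2 matches a cell `σ`
with top vertex `v` either to the edge `{v, w₀}` with `w₀` in the lower link of `v`, or to
`v * m' (σ - v)` where `m'` is the matching of the lower link of `v`; in both cases `m σ` has no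
vertex of index above `I v`. So the index of the top vertex never increases along a path of the
modified Hasse diagram, and on a cycle it is constant: all cells share one top vertex `v`
(`I` is injective). No cell of the cycle is `{v}`, whose partner edge has no face through `v`
other than `{v}`. Deleting `v` therefore yields a cycle of the matching of the lower link of `v`,
a complex with fewer simplices, and we conclude by induction.
-/

def IsTopVertex {V : Type*} (I : V → ℕ) (σ : Finset V) (v : V) : Prop :=
  v ∈ σ ∧ ∀ w ∈ σ, I w ≤ I v

section TopVertex
variable {V : Type*} {I : V → ℕ} {σ : Finset V} {v w : V}

lemma IsTopVertex.eq (hI : Function.Injective I) (hv : IsTopVertex I σ v)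
    (hw : IsTopVertex I σ w) : v = w :=
  hI (le_antisymm (hw.2 v hv.1) (hv.2 w hw.1))

lemma isTopVertex_choose (hσ : σ.Nonempty) :
    IsTopVertex I σ (Finset.exists_max_image σ I hσ).choose :=
  (Finset.exists_max_image σ I hσ).choose_spec

lemma Finset.Nonempty.exists_isTopVertex (hσ : σ.Nonempty) : ∃ v, IsTopVertex I σ v :=
  ⟨_, isTopVertex_choose hσ⟩

lemma isTopVertex_singleton : IsTopVertex I {v} v :=
  ⟨Finset.mem_singleton_self v, fun w hw => by rw [Finset.mem_singleton.mp hw]⟩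

lemma isTopVertex_insert [DecidableEq V] {τ : Finset V} (h : ∀ w ∈ τ, I w < I v) :
    IsTopVertex I (insert v τ) v := by
  refine ⟨Finset.mem_insert_self v τ, fun w hw => ?_⟩
  rcases Finset.mem_insert.mp hw with rfl | hw
  exacts [le_rfl, (h w hw).le]

end TopVertex

section LowerLink
variable {V : Type*} [DecidableEq V] {k : ℕ} {K : Finset (Finset V)} {f : V → Fin k → ℝ}
  {v w : V} {τ : Finset V}

lemma lowerLink_subset : lowerLink K f v ⊆ K := by
  classical exact Finset.filter_subset _ K

lemma index_lt_of_mem_lowerLink {I : V → ℕ}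
    (hcomp : ∀ v w : V, f v ≤ f w → f v ≠ f w → I v < I w)
    (hτ : τ ∈ lowerLink K f v) (hw : w ∈ τ) : I w < I v := by
  simp only [lowerLink, Finset.mem_filter] at hτ
  exact hcomp w v (hτ.2.2.2 w hw).1 (hτ.2.2.2 w hw).2

end LowerLink

section AlgMatch
variable {V : Type*} [DecidableEq V] [Fintype V] {k : ℕ} {f : V → Fin k → ℝ} {I : V → ℕ}

lemma mem_algMatch_A_iff {K : Finset (Finset V)} {σ : Finset V} :
    σ ∈ (algMatch f I K).A ↔ ∃ v, ({v} : Finset V) ∈ K ∧ (lowerLink K f v).Nonempty ∧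
      (σ = {v} ∨ ∃ τ ∈ (algMatch f I (lowerLink K f v)).A, σ = insert v τ) := by
  rw [algMatch]
  simp only [Finset.mem_union, Finset.mem_image, Finset.mem_biUnion, Finset.mem_filter,
    Finset.mem_univ, true_and]
  constructor
  · rintro (⟨v, ⟨hvK, hL⟩, rfl⟩ | ⟨v, ⟨hvK, hL⟩, τ, hτ, rfl⟩)
    · exact ⟨v, hvK, hL, Or.inl rfl⟩
    · rw [dif_pos hL] at hτ
      exact ⟨v, hvK, hL, Or.inr ⟨τ, hτ, rfl⟩⟩
  · rintro ⟨v, hvK, hL, (rfl | ⟨τ, hτ, rfl⟩)⟩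
    · exact Or.inl ⟨v, ⟨hvK, hL⟩, rfl⟩
    · exact Or.inr ⟨v, ⟨hvK, hL⟩, τ, by rwa [dif_pos hL], rfl⟩

open Classical in
noncomputable def minCriticalVerticesOfLowerLink (f : V → Fin k → ℝ) (I : V → ℕ)
    (K : Finset (Finset V)) (v : V) : Finset V :=
  let o := if _ : (lowerLink K f v).Nonempty then algMatch f I (lowerLink K f v)
    else ⟨∅, ∅, fun _ => ∅⟩
  let C0 : Finset V :=
    Finset.univ.filter fun w => ({w} : Finset V) ∈ lowerLink K f v \ (o.A ∪ o.B)
  C0.filter fun w => ∀ u ∈ C0, ¬(f u ≤ f w ∧ f u ≠ f w)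

/-- The vertex `w₀` that Algorithm 2 pairs with the vertex `v`. -/
noncomputable def algMatchPartner (f : V → Fin k → ℝ) (I : V → ℕ) (K : Finset (Finset V))
    (v : V) : V :=
  if hD : (minCriticalVerticesOfLowerLink f I K v).Nonempty then
    (Finset.exists_min_image _ I hD).choose
  else v

lemma singleton_mem_lowerLink_of_mem_minCriticalVerticesOfLowerLink {K : Finset (Finset V)}
    {v w : V} (hw : w ∈ minCriticalVerticesOfLowerLink f I K v) :
    ({w} : Finset V) ∈ lowerLink K f v := by
  simp only [minCriticalVerticesOfLowerLink, Finset.mem_filter, Finset.mem_sdiff] at hw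
  exact hw.1.2.1

lemma index_algMatchPartner_le (hcomp : ∀ v w : V, f v ≤ f w → f v ≠ f w → I v < I w)
    (K : Finset (Finset V)) (v : V) : I (algMatchPartner f I K v) ≤ I v := by
  unfold algMatchPartner
  split
  · next hD =>
    have hw := singleton_mem_lowerLink_of_mem_minCriticalVerticesOfLowerLink
      (Finset.exists_min_image _ I hD).choose_spec.1
    exact (index_lt_of_mem_lowerLink hcomp hw (Finset.mem_singleton_self _)).le
  · exact le_rfl

lemma algMatch_m_singleton (K : Finset (Finset V)) (v : V) :
    (algMatch f I K).m {v} = {v, algMatchPartner f I K v} := by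
  have hv : IsTopVertex I {v} v := isTopVertex_singleton
  have hchoose := Finset.mem_singleton.mp (isTopVertex_choose (I := I) ⟨v, hv.1⟩).1
  rw [algMatch]
  dsimp only
  rw [dif_pos ⟨v, hv.1⟩, hchoose, if_pos rfl]
  rfl

lemma algMatch_m_of_ne_singleton (hI : Function.Injective I) {K : Finset (Finset V)}
    {σ : Finset V} {v : V} (hv : IsTopVertex I σ v) (hσv : σ ≠ {v})
    (hL : (lowerLink K f v).Nonempty) :
    (algMatch f I K).m σ = insert v ((algMatch f I (lowerLink K f v)).m (σ.erase v)) := by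
  have hσ : σ.Nonempty := ⟨v, hv.1⟩
  rw [algMatch]
  dsimp only
  rw [dif_pos hσ, (isTopVertex_choose hσ).eq hI hv, if_neg hσv, dif_pos hL]

lemma subset_sup_of_mem_algMatch_A {K : Finset (Finset V)} {σ : Finset V}
    (hσ : σ ∈ (algMatch f I K).A) : σ ⊆ K.sup id := by
  obtain ⟨v, hvK, hL, rfl | ⟨τ, hτ, rfl⟩⟩ := mem_algMatch_A_iff.mp hσ
  · exact Finset.le_sup (f := id) hvK
  · refine Finset.insert_subset (Finset.le_sup (f := id) hvK (Finset.mem_singleton_self v)) ?_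
    exact (subset_sup_of_mem_algMatch_A hτ).trans (Finset.sup_mono lowerLink_subset)
termination_by K.card
decreasing_by exact lowerLink_card_lt K f v hL

lemma exists_isTopVertex_of_mem_algMatch_A
    (hcomp : ∀ v w : V, f v ≤ f w → f v ≠ f w → I v < I w)
    {K : Finset (Finset V)} {σ : Finset V} (hσ : σ ∈ (algMatch f I K).A) :
    ∃ v, IsTopVertex I σ v ∧ (lowerLink K f v).Nonempty ∧
      (σ = {v} ∨ σ.erase v ∈ (algMatch f I (lowerLink K f v)).A) := by
  obtain ⟨v, -, hL, rfl | ⟨τ, hτ, rfl⟩⟩ := mem_algMatch_A_iff.mp hσ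
  · exact ⟨v, isTopVertex_singleton, hL, Or.inl rfl⟩
  · have hτv : ∀ w ∈ τ, I w < I v := fun w hw => by
      obtain ⟨ρ, hρ, hwρ⟩ := Finset.mem_sup.mp (subset_sup_of_mem_algMatch_A hτ hw)
      exact index_lt_of_mem_lowerLink hcomp hρ hwρ
    have hvτ : v ∉ τ := fun hv => (hτv v hv).false
    exact ⟨v, isTopVertex_insert hτv, hL, Or.inr (by rwa [Finset.erase_insert hvτ])⟩

lemma nonempty_of_mem_algMatch_A {K : Finset (Finset V)} {σ : Finset V}
    (hσ : σ ∈ (algMatch f I K).A) : σ.Nonempty := by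
  obtain ⟨v, -, -, rfl | ⟨τ, -, rfl⟩⟩ := mem_algMatch_A_iff.mp hσ
  exacts [Finset.singleton_nonempty v, Finset.insert_nonempty v τ]

lemma exists_le_of_mem_algMatch_m (hI : Function.Injective I)
    (hcomp : ∀ v w : V, f v ≤ f w → f v ≠ f w → I v < I w)
    {K : Finset (Finset V)} {σ : Finset V} (hσ : σ ∈ (algMatch f I K).A)
    {w : V} (hw : w ∈ (algMatch f I K).m σ) : ∃ u ∈ σ, I w ≤ I u := by
  obtain ⟨v, hv, hL, rfl | hτ⟩ := exists_isTopVertex_of_mem_algMatch_A hcomp hσ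
  · rw [algMatch_m_singleton, Finset.mem_insert, Finset.mem_singleton] at hw
    refine ⟨v, Finset.mem_singleton_self v, ?_⟩
    rcases hw with rfl | rfl
    exacts [le_rfl, index_algMatchPartner_le hcomp K v]
  · have hσv : σ ≠ {v} := by
      rintro rfl
      rw [Finset.erase_singleton] at hτ
      exact Finset.not_nonempty_empty (nonempty_of_mem_algMatch_A hτ)
    rw [algMatch_m_of_ne_singleton hI hv hσv hL, Finset.mem_insert] at hw
    rcases hw with rfl | hw
    · exact ⟨w, hv.1, le_rfl⟩
    · obtain ⟨u, hu, hwu⟩ := exists_le_of_mem_algMatch_m hI hcomp hτ hw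
      exact ⟨u, Finset.mem_of_mem_erase hu, hwu⟩
termination_by K.card
decreasing_by exact lowerLink_card_lt K f v hL

end AlgMatch

/-- `σ 0, M.m (σ 0), σ 1, …, M.m (σ p), σ (p + 1) = σ 0` is a closed path of the modified Hasse
diagram. -/
def IsMatchCycle {V : Type*} [DecidableEq V] (M : MatchOut V) (p : ℕ) (σ : ℕ → Finset V) :
    Prop :=
  (∀ i ≤ p, σ i ∈ M.A) ∧ σ (p + 1) = σ 0 ∧
    ∀ i ≤ p, σ (i + 1) ≠ σ i ∧ σ (i + 1) ⊆ M.m (σ i) ∧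
      (σ (i + 1)).card + 1 = (M.m (σ i)).card

namespace IsMatchCycle
variable {V : Type*} [DecidableEq V] {p : ℕ} {σ : ℕ → Finset V}

lemma mem_A {M : MatchOut V} (hc : IsMatchCycle M p σ) {i : ℕ} (hi : i ≤ p + 1) :
    σ i ∈ M.A := by
  rcases Nat.lt_or_eq_of_le hi with hi | rfl
  · exact hc.1 i (Nat.lt_succ_iff.mp hi)
  · exact hc.2.1 ▸ hc.1 0 (Nat.zero_le p)

variable [Fintype V] {k : ℕ} {f : V → Fin k → ℝ} {I : V → ℕ} {K : Finset (Finset V)}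

lemma index_le (hI : Function.Injective I)
    (hcomp : ∀ v w : V, f v ≤ f w → f v ≠ f w → I v < I w)
    (hc : IsMatchCycle (algMatch f I K) p σ) {i j : ℕ} (hij : i ≤ j) (hj : j ≤ p + 1)
    {c : ℕ} (hi : ∀ w ∈ σ i, I w ≤ c) : ∀ w ∈ σ j, I w ≤ c := by
  induction j, hij using Nat.le_induction with
  | base => exact hi
  | succ j hij ih =>
    intro w hw
    obtain ⟨u, hu, hwu⟩ := exists_le_of_mem_algMatch_m hI hcomp (hc.1 j (by omega))
      ((hc.2.2 j (by omega)).2.1 hw)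
    exact hwu.trans (ih (by omega) u hu)

lemma exists_common_isTopVertex (hI : Function.Injective I)
    (hcomp : ∀ v w : V, f v ≤ f w → f v ≠ f w → I v < I w)
    (hc : IsMatchCycle (algMatch f I K) p σ) :
    ∃ v, ∀ i ≤ p + 1, IsTopVertex I (σ i) v := by
  have hne : ∀ i ≤ p + 1, (σ i).Nonempty := fun i hi => nonempty_of_mem_algMatch_A (hc.mem_A hi)
  obtain ⟨v, hv⟩ := (hne 0 (Nat.zero_le _)).exists_isTopVertex (I := I)
  refine ⟨v, fun i hi => ?_⟩
  obtain ⟨u, hu⟩ := (hne i hi).exists_isTopVertex (I := I)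
  have hle : ∀ w ∈ σ i, I w ≤ I v := hc.index_le hI hcomp (Nat.zero_le i) hi hv.2
  have hvu : I v ≤ I u := hc.index_le hI hcomp hi le_rfl hu.2 v (hc.2.1 ▸ hv.1)
  rwa [hI (le_antisymm (hle u hu.1) hvu)] at hu

lemma ne_singleton (hc : IsMatchCycle (algMatch f I K) p σ) {v : V}
    (htop : ∀ i ≤ p + 1, IsTopVertex I (σ i) v) {i : ℕ} (hi : i ≤ p) : σ i ≠ {v} := by
  intro hσi
  obtain ⟨hne, -, hcard⟩ := hc.2.2 i hi
  rw [hσi, algMatch_m_singleton] at hcard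
  have hcard_le : (σ (i + 1)).card ≤ 1 := by
    have := Finset.card_le_two (a := v) (b := algMatchPartner f I K v)
    omega
  have hv : v ∈ σ (i + 1) := (htop (i + 1) (by omega)).1
  exact hne (hσi ▸ Finset.eq_singleton_iff_unique_mem.mpr
    ⟨hv, fun w hw => Finset.card_le_one.mp hcard_le w hw v hv⟩)

lemma erase_isTopVertex (hI : Function.Injective I)
    (hcomp : ∀ v w : V, f v ≤ f w → f v ≠ f w → I v < I w)
    (hc : IsMatchCycle (algMatch f I K) p σ) {v : V}
    (htop : ∀ i ≤ p + 1, IsTopVertex I (σ i) v) :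
    (lowerLink K f v).Nonempty ∧
      IsMatchCycle (algMatch f I (lowerLink K f v)) p fun i => (σ i).erase v := by
  have hlink : ∀ i ≤ p, (lowerLink K f v).Nonempty ∧
      (σ i).erase v ∈ (algMatch f I (lowerLink K f v)).A := by
    intro i hi
    obtain ⟨u, hu, hL, hσu | hτ⟩ := exists_isTopVertex_of_mem_algMatch_A hcomp (hc.1 i hi)
    all_goals obtain rfl := hu.eq hI (htop i (by omega))
    exacts [absurd hσu (hc.ne_singleton htop hi), ⟨hL, hτ⟩]
  have hvm : ∀ i ≤ p, v ∉ (algMatch f I (lowerLink K f v)).m ((σ i).erase v) := by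
    intro i hi hv
    obtain ⟨u, hu, hvu⟩ := exists_le_of_mem_algMatch_m hI hcomp (hlink i hi).2 hv
    exact Finset.ne_of_mem_erase hu
      (hI (le_antisymm ((htop i (by omega)).2 u (Finset.mem_of_mem_erase hu)) hvu))
  refine ⟨(hlink 0 (Nat.zero_le p)).1, fun i hi => (hlink i hi).2,
    congrArg (Finset.erase · v) hc.2.1, fun i hi => ?_⟩
  obtain ⟨hne, hsub, hcard⟩ := hc.2.2 i hi
  rw [algMatch_m_of_ne_singleton hI (htop i (by omega)) (hc.ne_singleton htop hi)
    (hlink i hi).1] at hsub hcard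
  rw [Finset.card_insert_of_notMem (hvm i hi)] at hcard
  have hv₀ : v ∈ σ i := (htop i (by omega)).1
  have hv₁ : v ∈ σ (i + 1) := (htop (i + 1) (by omega)).1
  refine ⟨fun h => hne (Finset.erase_injOn' v hv₁ hv₀ h), Finset.subset_insert_iff.mp hsub, ?_⟩
  rw [← Finset.card_erase_add_one hv₁] at hcard
  exact Nat.succ_injective hcard

end IsMatchCycle

theorem not_isMatchCycle_algMatch {V : Type*} [DecidableEq V] [Fintype V] {k : ℕ}
    {f : V → Fin k → ℝ} {I : V → ℕ} (hI : Function.Injective I)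
    (hcomp : ∀ v w : V, f v ≤ f w → f v ≠ f w → I v < I w)
    (K : Finset (Finset V)) (p : ℕ) (σ : ℕ → Finset V) :
    ¬ IsMatchCycle (algMatch f I K) p σ := by
  intro hc
  obtain ⟨v, htop⟩ := hc.exists_common_isTopVertex hI hcomp
  obtain ⟨hL, hc'⟩ := hc.erase_isTopVertex hI hcomp htop
  exact not_isMatchCycle_algMatch hI hcomp (lowerLink K f v) p _ hc'
termination_by K.card
decreasing_by exact lowerLink_card_lt K f v hL

theorem stmt16_general {V : Type*} [DecidableEq V] [Fintype V] {k : ℕ}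
    (K : Finset (Finset V))
    (f : V → Fin k → ℝ) (I : V → ℕ) (hI : Function.Injective I)
    (hcomp : ∀ v w : V, f v ≤ f w → f v ≠ f w → I v < I w) :
    ¬ ∃ (p : ℕ) (σ : ℕ → Finset V), (∀ i ≤ p, σ i ∈ (algMatch f I K).A) ∧
        σ (p + 1) = σ 0 ∧
        ∀ i ≤ p, σ (i + 1) ≠ σ i ∧ σ (i + 1) ⊆ (algMatch f I K).m (σ i) ∧
          (σ (i + 1)).card + 1 = ((algMatch f I K).m (σ i)).card :=
  fun ⟨p, σ, hc⟩ => not_isMatchCycle_algMatch hI hcomp K p σ hc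

/-- the partial matching produced by Algorithm 2 is acyclic: there is
no nontrivial directed cycle σ₀, m σ₀, σ₁, m σ₁, …, σ_p, m σ_p, σ_{p+1} = σ₀ in the
modified Hasse diagram, where each σ_{i+1} ≠ σ_i is a codimension-one face of m σ_i. -/
theorem stmt16 {V : Type*} [DecidableEq V] [Fintype V] {k : ℕ}
    (K : Finset (Finset V))
    (hne : ∀ σ ∈ K, σ.Nonempty)
    (hdown : ∀ σ ∈ K, ∀ τ, τ ⊆ σ → τ.Nonempty → τ ∈ K)
    (f : V → Fin k → ℝ) (I : V → ℕ) (hI : Function.Injective I)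
    (hcomp : ∀ v w : V, f v ≤ f w → f v ≠ f w → I v < I w) :
    ¬ ∃ (p : ℕ) (σ : ℕ → Finset V), (∀ i ≤ p, σ i ∈ (algMatch f I K).A) ∧
        σ (p + 1) = σ 0 ∧
        ∀ i ≤ p, σ (i + 1) ≠ σ i ∧ σ (i + 1) ⊆ (algMatch f I K).m (σ i) ∧
          (σ (i + 1)).card + 1 = ((algMatch f I K).m (σ i)).card :=
  stmt16_general K f I hI hcomp
end

section
/- Let (A, B, C, m) be an acyclic partial matching on a multifiltered S-complex (S, κ) satisfying σ ∈ S^α ⟹ m(σ) ∈ S^α. Enumerate A = {A(1), ..., A(n)} and perform the n successive reductions at the pairs (m(A(i)), A(i)). Then the final complex has underlying set C, and for every α ⪯ β in ℝ^k and every q, the persistent homology H_q^{α,β}(S) is isomorphic to H_q^{α,β}(C). -/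
/-- An `S`-complex over a ring `R`: a finite graded set with a coincidence index `κ`
raising dimension by one and whose induced boundary squares to zero. -/
structure SComplex (R S : Type*) [CommRing R] [Fintype S] [DecidableEq S] where
  dim : S → ℕ
  κ : S → S → R
  dim_rule : ∀ σ τ, κ σ τ ≠ 0 → dim σ = dim τ + 1
  dsq : ∀ σ ξ, ∑ τ, κ σ τ * κ τ ξ = 0

/-- A partial matching `(A, B, C, m)` on an `S`-complex: a partition of `S` together
with a bijection `m : A → B` such that `κ(m τ, τ)` is invertible for `τ ∈ A`. -/
structure PartialMatching {R S : Type*} [CommRing R] [Fintype S] [DecidableEq S]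
    (X : SComplex R S) where
  A : Set S
  B : Set S
  C : Set S
  m : S → S
  cover : A ∪ B ∪ C = Set.univ
  disjAB : Disjoint A B
  disjAC : Disjoint A C
  disjBC : Disjoint B C
  bij : Set.BijOn m A B
  unit : ∀ τ ∈ A, IsUnit (X.κ (m τ) τ)

/-- Acyclicity of a partial matching: there is no nontrivial sequence
`σ₀, m σ₀, σ₁, m σ₁, …, σ_p, m σ_p, σ_{p+1} = σ₀` with `σ_{i+1} ≠ σ_i` and `σ_{i+1}`
a primary face of `m σ_i`. -/
def PartialMatching.Acyclic {R S : Type*} [CommRing R] [Fintype S] [DecidableEq S]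
    {X : SComplex R S} (M : PartialMatching X) : Prop :=
  ¬ ∃ (p : ℕ) (σ : ℕ → S), (∀ i ≤ p, σ i ∈ M.A) ∧ σ (p + 1) = σ 0 ∧
      ∀ i ≤ p, σ (i + 1) ≠ σ i ∧ X.κ (M.m (σ i)) (σ (i + 1)) ≠ 0

/-- The reduced coincidence index obtained by reduction of the pair `(m σ₀, σ₀)`:
`κ̄(η, ξ) = κ(η, ξ) − κ(η, σ₀)·κ(m σ₀, ξ)/κ(m σ₀, σ₀)`. -/
noncomputable def reducedKappa {R S : Type*} [CommRing R] [Fintype S] [DecidableEq S]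
    (X : SComplex R S) (M : PartialMatching X) (σ₀ : S) : S → S → R :=
  fun η ξ => X.κ η ξ - X.κ η σ₀ * Ring.inverse (X.κ (M.m σ₀) σ₀) * X.κ (M.m σ₀) ξ

/-- The boundary operator induced by a coincidence index `κ`, as a linear
endomorphism of the free module `C_*(S) = S →₀ R`. -/
noncomputable def bdryL {R S : Type*} [CommRing R] [Fintype S] [DecidableEq S]
    (κ : S → S → R) : (S →₀ R) →ₗ[R] (S →₀ R) :=
  Finsupp.lsum R fun η =>
    LinearMap.toSpanSingleton R (S →₀ R) (∑ ξ, Finsupp.single ξ (κ η ξ))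

/-- The submodule of cycles supported in `T` (typically `T = S^α ∩ {dim = q}`). -/
noncomputable def cyclesIn {R S : Type*} [CommRing R] [Fintype S] [DecidableEq S]
    (κ : S → S → R) (T : Set S) : Submodule R (S →₀ R) :=
  Finsupp.supported R R T ⊓ LinearMap.ker (bdryL κ)

/-- The submodule of boundaries of chains supported in `T`
(typically `T = S^β ∩ {dim = q+1}`). -/
noncomputable def bdriesIn {R S : Type*} [CommRing R] [Fintype S] [DecidableEq S]
    (κ : S → S → R) (T : Set S) : Submodule R (S →₀ R) :=
  Submodule.map (bdryL κ) (Finsupp.supported R R T)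

/-- The `q`-th persistent homology module of a filtered complex at `(α, β)`: the image
of the module of `q`-cycles of `S^α` (`Tz = S^α ∩ {dim = q}`) in the quotient by the
boundaries coming from `S^β` (`Tb = S^β ∩ {dim = q+1}`); this realizes
`im (H_q(S^α) → H_q(S^β)) ≅ Z_q^α / (Z_q^α ∩ B_q^β)`. -/
abbrev persHom {R S : Type*} [CommRing R] [Fintype S] [DecidableEq S]
    (κ : S → S → R) (Tz Tb : Set S) : Type _ :=
  ↥(Submodule.map (bdriesIn κ Tb).mkQ (cyclesIn κ Tz))

/-- One elementary reduction of the coincidence index at the matched pair `(m a, a)`. -/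
noncomputable def reduceOne {R S : Type*} [CommRing R] (m : S → S) (a : S)
    (κ : S → S → R) : S → S → R :=
  fun η ξ => κ η ξ - κ η a * Ring.inverse (κ (m a) a) * κ (m a) ξ

/-- The successive reductions at the pairs `(m a, a)`, `a` running through the list `l`
(the head of the list is reduced first). -/
noncomputable def reduceList {R S : Type*} [CommRing R] (m : S → S) :
    List S → (S → S → R) → S → S → R
  | [], κ => κ
  | a :: l, κ => reduceList m l (reduceOne m a κ)

/-- Restriction of a coincidence index to a subset `C` (extended by zero outside `C`),
modelling the final complex with underlying set `C`. -/
noncomputable def restrictKappa {R S : Type*} [CommRing R] (κ : S → S → R)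
    (C : Set S) : S → S → R :=
  fun η ξ => open Classical in if η ∈ C ∧ ξ ∈ C then κ η ξ else 0


/-!
Reducing a matched pair `(m a, a)` with `κ(m a, a)` a unit is a chain homotopy equivalence.
With the homotopy `h x = κ(m a, a)⁻¹ x(a) · m a` and the projection `π` forgetting `a` and `m a`,
the maps `P = π ∘ (1 - ∂h)` and `J = 1 - h∂` intertwine `∂` with the boundary of the reduced
index `κ̄` on the remaining cells, and satisfy `P J = 1` and `J P - 1 = -∂h` on cycles. Since `m a`
lies in every filtration level containing `a`, they respect `S^α ∩ {dim = q}`, so each reduction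
induces an isomorphism of persistent homology.

The reductions are carried out on the index restricted to the cells not removed yet. A removed
cell has a zero column (if it lies in `A`) or a zero row (if it lies in `B`), so the restricted
index still squares to zero. Acyclicity keeps `κ(m c, c)` a unit for the pairs still to be
reduced: a new nonzero entry `κ̄(m τ, σ)` only arises from a V-path `τ → a → σ`, so a change of
`κ(m c, c)` would close a V-path `c → a → c`.
-/

section Boundary

variable {R S : Type*} [CommRing R] [Fintype S] [DecidableEq S]

theorem bdryL_apply (κ : S → S → R) (x : S →₀ R) (ξ : S) :
    bdryL κ x ξ = ∑ η, x η * κ η ξ := by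
  rw [bdryL, Finsupp.lsum_apply, Finsupp.sum_fintype _ _ (by simp), Finsupp.finsetSum_apply]
  refine Finset.sum_congr rfl fun η _ => ?_
  simp [Finsupp.single_apply, mul_comm]

theorem bdryL_single_apply (κ : S → S → R) (b : S) (c : R) (ξ : S) :
    bdryL κ (Finsupp.single b c) ξ = c * κ b ξ := by
  simp [bdryL_apply, Finsupp.single_apply]

theorem bdryL_bdryL {κ : S → S → R} (hdsq : ∀ η ξ, ∑ τ, κ η τ * κ τ ξ = 0) (x : S →₀ R) :
    bdryL κ (bdryL κ x) = 0 := by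
  ext ξ
  simp only [bdryL_apply, Finset.sum_mul, Finsupp.coe_zero, Pi.zero_apply]
  rw [Finset.sum_comm]
  simp [mul_assoc, ← Finset.mul_sum, hdsq]

theorem bdryL_mem_supported {κ : S → S → R} {T T' : Set S}
    (h : ∀ η ∈ T, ∀ ξ, κ η ξ ≠ 0 → ξ ∈ T') {x : S →₀ R}
    (hx : x ∈ Finsupp.supported R R T) : bdryL κ x ∈ Finsupp.supported R R T' := by
  rw [Finsupp.mem_supported'] at hx ⊢
  intro ξ hξ
  rw [bdryL_apply]
  refine Finset.sum_eq_zero fun η _ => ?_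
  by_cases hη : η ∈ T
  · by_cases hκ : κ η ξ = 0
    · rw [hκ, mul_zero]
    · exact absurd (h η hη ξ hκ) hξ
  · rw [hx η hη, zero_mul]

end Boundary

section PersistentHomology

variable {R S : Type*} [CommRing R] [Fintype S] [DecidableEq S]
  {κ₁ κ₂ : S → S → R} {Tz₁ Tb₁ Tz₂ Tb₂ : Set S}

noncomputable def persHomMap (f : (S →₀ R) →ₗ[R] (S →₀ R))
    (hb : bdriesIn κ₁ Tb₁ ≤ (bdriesIn κ₂ Tb₂).comap f)
    (hc : cyclesIn κ₁ Tz₁ ≤ (cyclesIn κ₂ Tz₂).comap f) :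
    persHom κ₁ Tz₁ Tb₁ →ₗ[R] persHom κ₂ Tz₂ Tb₂ :=
  (Submodule.mapQ _ _ f hb).restrict <| by
    rintro _ ⟨x, hx, rfl⟩
    exact ⟨f x, hc hx, rfl⟩

theorem persHomMap_persHomMap (f g : (S →₀ R) →ₗ[R] (S →₀ R))
    (hfb : bdriesIn κ₁ Tb₁ ≤ (bdriesIn κ₂ Tb₂).comap f)
    (hfc : cyclesIn κ₁ Tz₁ ≤ (cyclesIn κ₂ Tz₂).comap f)
    (hgb : bdriesIn κ₂ Tb₂ ≤ (bdriesIn κ₁ Tb₁).comap g)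
    (hgc : cyclesIn κ₂ Tz₂ ≤ (cyclesIn κ₁ Tz₁).comap g)
    (hgf : ∀ x ∈ cyclesIn κ₁ Tz₁, g (f x) - x ∈ bdriesIn κ₁ Tb₁)
    (z : persHom κ₁ Tz₁ Tb₁) :
    persHomMap g hgb hgc (persHomMap f hfb hfc z) = z := by
  obtain ⟨_, x, hx, rfl⟩ := z
  exact Subtype.ext ((Submodule.Quotient.eq _).2 (hgf x hx))

noncomputable def persHomEquivOfHomotopyEquiv (f g : (S →₀ R) →ₗ[R] (S →₀ R))
    (hfb : bdriesIn κ₁ Tb₁ ≤ (bdriesIn κ₂ Tb₂).comap f)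
    (hfc : cyclesIn κ₁ Tz₁ ≤ (cyclesIn κ₂ Tz₂).comap f)
    (hgb : bdriesIn κ₂ Tb₂ ≤ (bdriesIn κ₁ Tb₁).comap g)
    (hgc : cyclesIn κ₂ Tz₂ ≤ (cyclesIn κ₁ Tz₁).comap g)
    (hgf : ∀ x ∈ cyclesIn κ₁ Tz₁, g (f x) - x ∈ bdriesIn κ₁ Tb₁)
    (hfg : ∀ y ∈ cyclesIn κ₂ Tz₂, f (g y) - y ∈ bdriesIn κ₂ Tb₂) :
    persHom κ₁ Tz₁ Tb₁ ≃ₗ[R] persHom κ₂ Tz₂ Tb₂ :=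
  { persHomMap f hfb hfc with
    invFun := persHomMap g hgb hgc
    left_inv := persHomMap_persHomMap f g hfb hfc hgb hgc hgf
    right_inv := persHomMap_persHomMap g f hgb hgc hfb hfc hfg }

end PersistentHomology

section PairHomotopy

variable {R S : Type*} [CommRing R] (κ : S → S → R) (m : S → S) (a : S)

noncomputable def pairHomotopy : (S →₀ R) →ₗ[R] (S →₀ R) :=
  Finsupp.lsingle (m a) ∘ₗ (Ring.inverse (κ (m a) a) • Finsupp.lapply a)

noncomputable def pairProj [DecidableEq S] : (S →₀ R) →ₗ[R] (S →₀ R) :=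
  (Finsupp.supported R R ({a, m a} : Set S)ᶜ).subtype ∘ₗ
    Finsupp.restrictDom R R ({a, m a} : Set S)ᶜ

variable {κ m a}

theorem pairHomotopy_apply (x : S →₀ R) :
    pairHomotopy κ m a x = Finsupp.single (m a) (Ring.inverse (κ (m a) a) * x a) :=
  rfl

theorem pairHomotopy_eq_zero {x : S →₀ R} (hx : x a = 0) : pairHomotopy κ m a x = 0 := by
  simp [pairHomotopy_apply, hx]

theorem pairHomotopy_single (hne : a ≠ m a) (c : R) :
    pairHomotopy κ m a (Finsupp.single (m a) c) = 0 :=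
  pairHomotopy_eq_zero (Finsupp.single_eq_of_ne hne)

theorem apply_eq_zero_of_pairHomotopy_eq_zero (hu : IsUnit (κ (m a) a)) {x : S →₀ R}
    (hx : pairHomotopy κ m a x = 0) : x a = 0 := by
  rw [pairHomotopy_apply, Finsupp.single_eq_zero] at hx
  calc x a = κ (m a) a * Ring.inverse (κ (m a) a) * x a := by
        rw [Ring.mul_inverse_cancel _ hu, one_mul]
    _ = 0 := by rw [mul_assoc, hx, mul_zero]

theorem pairHomotopy_eq_zero_of_notMem {T : Set S} {x : S →₀ R}
    (hx : x ∈ Finsupp.supported R R T) (ha : a ∉ T) : pairHomotopy κ m a x = 0 :=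
  pairHomotopy_eq_zero ((Finsupp.mem_supported' R x).1 hx a ha)

theorem pairHomotopy_mem_supported {T T' : Set S} (h : a ∈ T → m a ∈ T') {x : S →₀ R}
    (hx : x ∈ Finsupp.supported R R T) : pairHomotopy κ m a x ∈ Finsupp.supported R R T' := by
  by_cases ha : a ∈ T
  · exact Finsupp.single_mem_supported R _ (h ha)
  · rw [pairHomotopy_eq_zero_of_notMem hx ha]
    exact zero_mem _

variable [DecidableEq S]

theorem pairProj_apply (x : S →₀ R) (ξ : S) :
    pairProj m a x ξ = if ξ = a ∨ ξ = m a then 0 else x ξ := by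
  simp only [pairProj, LinearMap.coe_comp, Function.comp_apply, Submodule.coe_subtype,
    Finsupp.restrictDom_apply, Finsupp.filter_apply]
  split_ifs <;> simp_all

theorem pairProj_single (c : R) : pairProj m a (Finsupp.single (m a) c) = 0 := by
  ext ξ
  by_cases h : ξ = m a <;> simp [pairProj_apply, h, eq_comm]

theorem pairProj_eq_self {y : S →₀ R}
    (hy : y ∈ Finsupp.supported R R ({a, m a} : Set S)ᶜ) : pairProj m a y = y :=
  congrArg Subtype.val (LinearMap.congr_fun (Finsupp.restrictDom_comp_subtype _) ⟨y, hy⟩)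

theorem pairProj_mem_supported {T : Set S} {x : S →₀ R}
    (hx : x ∈ Finsupp.supported R R T) :
    pairProj m a x ∈ Finsupp.supported R R (T \ {a, m a}) := by
  rw [Finsupp.mem_supported'] at hx ⊢
  intro ξ hξ
  rw [pairProj_apply]
  split_ifs with h
  · rfl
  · exact hx ξ fun hT => hξ ⟨hT, by simpa using h⟩

theorem pairProj_eq_sub_single (hu : IsUnit (κ (m a) a)) {w : S →₀ R}
    (hw : pairHomotopy κ m a w = 0) :
    pairProj m a w = w - Finsupp.single (m a) (w (m a)) := by
  have hwa := apply_eq_zero_of_pairHomotopy_eq_zero hu hw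
  ext ξ
  by_cases h : ξ = m a
  · subst h
    simp [pairProj_apply]
  · by_cases h' : ξ = a
    · subst h'
      simp [pairProj_apply, hwa, h]
    · simp [pairProj_apply, h, h']

theorem pairProj_mem_supported_compl (x : S →₀ R) :
    pairProj m a x ∈ Finsupp.supported R R ({a, m a} : Set S)ᶜ :=
  (Finsupp.restrictDom R R _ x).2

end PairHomotopy

section ElementaryReduction

variable {R S : Type*} [CommRing R] [Fintype S] [DecidableEq S]
  (κ : S → S → R) (m : S → S) (a : S)

noncomputable def reductionProj : (S →₀ R) →ₗ[R] (S →₀ R) :=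
  pairProj m a ∘ₗ (LinearMap.id - bdryL κ ∘ₗ pairHomotopy κ m a)

noncomputable def reductionIncl : (S →₀ R) →ₗ[R] (S →₀ R) :=
  LinearMap.id - pairHomotopy κ m a ∘ₗ bdryL κ

structure PairAdapted (T : Set S) : Prop where
  mem_of_coface : ∀ η ∈ T, κ η a ≠ 0 → m a ∈ T
  face_mem : a ∈ T → ∀ ξ, κ (m a) ξ ≠ 0 → ξ ∈ T

variable {κ m a}

theorem reductionProj_apply (x : S →₀ R) :
    reductionProj κ m a x = pairProj m a (x - bdryL κ (pairHomotopy κ m a x)) :=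
  rfl

theorem reductionIncl_apply (y : S →₀ R) :
    reductionIncl κ m a y = y - pairHomotopy κ m a (bdryL κ y) :=
  rfl

theorem bdryL_restrictKappa_reduceOne (z : S →₀ R) :
    bdryL (restrictKappa (reduceOne m a κ) ({a, m a} : Set S)ᶜ) z =
      reductionProj κ m a (bdryL κ (pairProj m a z)) := by
  ext ξ
  rw [reductionProj_apply, pairProj_apply]
  split_ifs with hξ
  · rw [bdryL_apply]
    refine Finset.sum_eq_zero fun η _ => ?_
    simp [restrictKappa, hξ]
  · simp only [Finsupp.coe_sub, Pi.sub_apply, pairHomotopy_apply, bdryL_single_apply]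
    simp only [bdryL_apply, Finset.mul_sum, Finset.sum_mul, ← Finset.sum_sub_distrib]
    refine Finset.sum_congr rfl fun η _ => ?_
    by_cases hη : η = a ∨ η = m a
    · simp [pairProj_apply, restrictKappa, hη]
    · simp [pairProj_apply, restrictKappa, reduceOne, hη, hξ]
      ring

section IsUnit

variable (hu : IsUnit (κ (m a) a))
include hu

theorem pairHomotopy_bdryL_single (c : R) :
    pairHomotopy κ m a (bdryL κ (Finsupp.single (m a) c)) = Finsupp.single (m a) c := by
  rw [pairHomotopy_apply, bdryL_single_apply, mul_left_comm, Ring.inverse_mul_cancel _ hu,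
    mul_one]

theorem pairHomotopy_sub_bdryL_pairHomotopy (x : S →₀ R) :
    pairHomotopy κ m a (x - bdryL κ (pairHomotopy κ m a x)) = 0 := by
  rw [map_sub, pairHomotopy_apply x, pairHomotopy_bdryL_single hu, sub_self]

theorem reductionProj_bdryL_single (c : R) :
    reductionProj κ m a (bdryL κ (Finsupp.single (m a) c)) = 0 := by
  rw [reductionProj_apply, pairHomotopy_bdryL_single hu, sub_self, map_zero]

theorem reductionIncl_pairProj {w : S →₀ R} (hdw : bdryL κ w = 0)
    (hw : pairHomotopy κ m a w = 0) : reductionIncl κ m a (pairProj m a w) = w := by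
  rw [reductionIncl_apply, pairProj_eq_sub_single hu hw, map_sub, hdw, zero_sub, map_neg,
    pairHomotopy_bdryL_single hu, sub_neg_eq_add, sub_add_cancel]

variable (hdsq : ∀ η ξ, ∑ τ, κ η τ * κ τ ξ = 0)
include hdsq

theorem reductionIncl_reductionProj_sub {x : S →₀ R} (hx : bdryL κ x = 0) :
    reductionIncl κ m a (reductionProj κ m a x) - x = bdryL κ (pairHomotopy κ m a (-x)) := by
  set z := x - bdryL κ (pairHomotopy κ m a x)
  have hdz : bdryL κ z = 0 := by simp [z, hx, bdryL_bdryL hdsq]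
  rw [reductionProj_apply, reductionIncl_pairProj hu hdz (pairHomotopy_sub_bdryL_pairHomotopy hu x)]
  simp [z]

theorem bdryL_reductionProj (x : S →₀ R) :
    bdryL (restrictKappa (reduceOne m a κ) ({a, m a} : Set S)ᶜ) (reductionProj κ m a x) =
      reductionProj κ m a (bdryL κ x) := by
  set z := x - bdryL κ (pairHomotopy κ m a x)
  have hPx : reductionProj κ m a x = z - Finsupp.single (m a) (z (m a)) :=
    pairProj_eq_sub_single hu (pairHomotopy_sub_bdryL_pairHomotopy hu x)
  calc _ = reductionProj κ m a (bdryL κ (pairProj m a (reductionProj κ m a x))) :=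
        bdryL_restrictKappa_reduceOne _
    _ = reductionProj κ m a (bdryL κ (z - Finsupp.single (m a) (z (m a)))) := by
        rw [← hPx]
        exact congrArg _ (congrArg _ (pairProj_eq_self (pairProj_mem_supported_compl _)))
    _ = reductionProj κ m a (bdryL κ x) := by
        rw [map_sub, map_sub, reductionProj_bdryL_single hu, sub_zero, map_sub (bdryL κ),
          bdryL_bdryL hdsq, sub_zero]

theorem bdryL_reductionIncl {y : S →₀ R}
    (hy : y ∈ Finsupp.supported R R ({a, m a} : Set S)ᶜ) :
    bdryL κ (reductionIncl κ m a y) =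
      reductionIncl κ m a (bdryL (restrictKappa (reduceOne m a κ) ({a, m a} : Set S)ᶜ) y) := by
  have hw : pairHomotopy κ m a (bdryL κ (reductionIncl κ m a y)) = 0 := by
    rw [reductionIncl_apply, map_sub]
    exact pairHomotopy_sub_bdryL_pairHomotopy hu _
  rw [bdryL_restrictKappa_reduceOne, pairProj_eq_self hy, reductionProj_apply,
    ← map_sub (bdryL κ), ← reductionIncl_apply]
  exact (reductionIncl_pairProj hu (bdryL_bdryL hdsq _) hw).symm

end IsUnit

theorem reductionProj_reductionIncl (hne : a ≠ m a) {y : S →₀ R}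
    (hy : y ∈ Finsupp.supported R R ({a, m a} : Set S)ᶜ) :
    reductionProj κ m a (reductionIncl κ m a y) = y := by
  have hya : y a = 0 := (Finsupp.mem_supported' R y).1 hy a (by simp)
  have hJ : pairHomotopy κ m a (reductionIncl κ m a y) = 0 := by
    rw [reductionIncl_apply, map_sub, pairHomotopy_eq_zero hya, pairHomotopy_apply (bdryL κ y),
      pairHomotopy_single hne, sub_zero]
  rw [reductionProj_apply, hJ, map_zero, sub_zero, reductionIncl_apply, map_sub,
    pairProj_eq_self hy, pairHomotopy_apply, pairProj_single, sub_zero]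

theorem reductionProj_mem_supported {T : Set S} (hT : a ∈ T → ∀ ξ, κ (m a) ξ ≠ 0 → ξ ∈ T)
    {x : S →₀ R} (hx : x ∈ Finsupp.supported R R T) :
    reductionProj κ m a x ∈ Finsupp.supported R R (T \ {a, m a}) := by
  refine pairProj_mem_supported (sub_mem hx ?_)
  rw [LinearMap.comp_apply]
  by_cases ha : a ∈ T
  · refine bdryL_mem_supported (T := {m a}) ?_
      (pairHomotopy_mem_supported (fun _ => Set.mem_singleton _) hx)
    rintro η rfl
    exact hT ha
  · rw [pairHomotopy_eq_zero_of_notMem hx ha, map_zero]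
    exact zero_mem _

theorem reductionIncl_mem_supported {T : Set S} (hT : ∀ η ∈ T, κ η a ≠ 0 → m a ∈ T)
    {y : S →₀ R} (hy : y ∈ Finsupp.supported R R T) :
    reductionIncl κ m a y ∈ Finsupp.supported R R T := by
  refine sub_mem hy ?_
  rw [LinearMap.comp_apply]
  by_cases hda : bdryL κ y a = 0
  · rw [pairHomotopy_eq_zero hda]
    exact zero_mem _
  · rw [bdryL_apply] at hda
    obtain ⟨η, -, hη⟩ := Finset.exists_ne_zero_of_sum_ne_zero hda
    have hηT : η ∈ T := (Finsupp.mem_supported R y).1 hy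
      (Finsupp.mem_support_iff.2 (left_ne_zero_of_mul hη))
    exact Finsupp.single_mem_supported R _ (hT η hηT (right_ne_zero_of_mul hη))

theorem nonempty_persHom_equiv_reduceOne (hdsq : ∀ η ξ, ∑ τ, κ η τ * κ τ ξ = 0)
    (hu : IsUnit (κ (m a) a)) (hne : a ≠ m a) {Tz Tb : Set S}
    (hTz : PairAdapted κ m a Tz) (hTb : PairAdapted κ m a Tb) (hzb : a ∈ Tz → m a ∈ Tb) :
    Nonempty (persHom κ Tz Tb ≃ₗ[R]
      persHom (restrictKappa (reduceOne m a κ) ({a, m a} : Set S)ᶜ)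
        (Tz \ {a, m a}) (Tb \ {a, m a})) := by
  have hcompl {T : Set S} {y : S →₀ R} (hy : y ∈ Finsupp.supported R R (T \ {a, m a})) :
      y ∈ Finsupp.supported R R ({a, m a} : Set S)ᶜ :=
    Finsupp.supported_mono (fun _ h => h.2) hy
  have hsub {T : Set S} {y : S →₀ R} (hy : y ∈ Finsupp.supported R R (T \ {a, m a})) :
      y ∈ Finsupp.supported R R T :=
    Finsupp.supported_mono Set.sdiff_subset hy
  refine ⟨persHomEquivOfHomotopyEquiv (reductionProj κ m a) (reductionIncl κ m a)
    ?_ ?_ ?_ ?_ ?_ ?_⟩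
  · rintro _ ⟨c, hc, rfl⟩
    exact ⟨_, reductionProj_mem_supported hTb.face_mem hc, bdryL_reductionProj hu hdsq c⟩
  · rintro x ⟨hx, hdx⟩
    refine ⟨reductionProj_mem_supported hTz.face_mem hx, ?_⟩
    simp_all [LinearMap.mem_ker, bdryL_reductionProj hu hdsq]
  · rintro _ ⟨c, hc, rfl⟩
    exact ⟨_, reductionIncl_mem_supported hTb.mem_of_coface (hsub hc),
      bdryL_reductionIncl hu hdsq (hcompl hc)⟩
  · rintro y ⟨hy, hdy⟩
    refine ⟨reductionIncl_mem_supported hTz.mem_of_coface (hsub hy), ?_⟩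
    simp_all [LinearMap.mem_ker, bdryL_reductionIncl hu hdsq (hcompl hy)]
  · rintro x ⟨hx, hdx⟩
    rw [reductionIncl_reductionProj_sub hu hdsq hdx]
    exact ⟨_, pairHomotopy_mem_supported hzb (neg_mem hx), rfl⟩
  · rintro y ⟨hy, -⟩
    rw [reductionProj_reductionIncl hne (hcompl hy), sub_self]
    exact zero_mem _

end ElementaryReduction

section ReduceOne

variable {R S : Type*} [CommRing R] {κ : S → S → R} {m : S → S} {a : S}

theorem reduceOne_ne_zero {η ξ : S} (h : reduceOne m a κ η ξ ≠ 0) :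
    κ η ξ ≠ 0 ∨ (κ η a ≠ 0 ∧ κ (m a) ξ ≠ 0) := by
  by_contra! hc
  obtain ⟨h₁, h₂⟩ := hc
  by_cases ha : κ η a = 0 <;> simp_all [reduceOne]

theorem reduceOne_apply_left (hu : IsUnit (κ (m a) a)) (ξ : S) :
    reduceOne m a κ (m a) ξ = 0 := by
  rw [reduceOne, Ring.mul_inverse_cancel _ hu, one_mul, sub_self]

theorem reduceOne_apply_right (hu : IsUnit (κ (m a) a)) (η : S) :
    reduceOne m a κ η a = 0 := by
  rw [reduceOne, mul_assoc, Ring.inverse_mul_cancel _ hu, mul_one, sub_self]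

theorem reduceOne_apply_of_forall_left_eq_zero {τ : S} (h : ∀ η, κ η τ = 0) (η : S) :
    reduceOne m a κ η τ = 0 := by
  simp [reduceOne, h]

theorem reduceOne_apply_of_forall_right_eq_zero {τ : S} (h : ∀ ξ, κ τ ξ = 0) (ξ : S) :
    reduceOne m a κ τ ξ = 0 := by
  simp [reduceOne, h]

variable [Fintype S]

theorem reduceOne_dsq (hdsq : ∀ η ξ, ∑ τ, κ η τ * κ τ ξ = 0) (η ξ : S) :
    ∑ τ, reduceOne m a κ η τ * reduceOne m a κ τ ξ = 0 := by
  set v := Ring.inverse (κ (m a) a)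
  have hterm : ∀ τ, reduceOne m a κ η τ * reduceOne m a κ τ ξ =
      κ η τ * κ τ ξ - (κ η τ * κ τ a) * (v * κ (m a) ξ) - (κ η a * v) * (κ (m a) τ * κ τ ξ)
        + (κ η a * v * (v * κ (m a) ξ)) * (κ (m a) τ * κ τ a) := fun τ => by
    simp only [reduceOne, v]
    ring
  simp only [hterm, Finset.sum_add_distrib, Finset.sum_sub_distrib, ← Finset.sum_mul,
    ← Finset.mul_sum, hdsq]
  ring

end ReduceOne

section Restriction

variable {R S : Type*} [CommRing R] {κ : S → S → R} {T : Set S}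

theorem restrictKappa_of_mem {η ξ : S} (hη : η ∈ T) (hξ : ξ ∈ T) :
    restrictKappa κ T η ξ = κ η ξ :=
  if_pos ⟨hη, hξ⟩

theorem restrictKappa_ne_zero {η ξ : S} (h : restrictKappa κ T η ξ ≠ 0) :
    η ∈ T ∧ ξ ∈ T ∧ κ η ξ ≠ 0 := by
  by_cases hT : η ∈ T ∧ ξ ∈ T
  · exact ⟨hT.1, hT.2, by rwa [restrictKappa_of_mem hT.1 hT.2] at h⟩
  · exact absurd (if_neg hT) h

theorem restrictKappa_univ : restrictKappa κ Set.univ = κ := by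
  funext η ξ
  simp [restrictKappa]

theorem restrictKappa_reduceOne_restrictKappa {m : S → S} {a : S} (ha : a ∈ T) (hb : m a ∈ T) :
    restrictKappa (reduceOne m a (restrictKappa κ T)) ({a, m a} : Set S)ᶜ =
      restrictKappa (reduceOne m a κ) (T \ {a, m a}) := by
  funext η ξ
  by_cases h : η ∈ T \ {a, m a} ∧ ξ ∈ T \ {a, m a}
  · rw [restrictKappa_of_mem h.1.2 h.2.2, restrictKappa_of_mem h.1 h.2]
    simp only [reduceOne, restrictKappa_of_mem h.1.1 h.2.1, restrictKappa_of_mem h.1.1 ha,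
      restrictKappa_of_mem hb ha, restrictKappa_of_mem hb h.2.1]
  · rw [show restrictKappa (reduceOne m a κ) (T \ {a, m a}) η ξ = 0 from if_neg h]
    simp only [restrictKappa, reduceOne, Set.mem_sdiff] at h ⊢
    split_ifs <;> simp_all

theorem restrictKappa_dsq [Fintype S] (hdsq : ∀ η ξ, ∑ τ, κ η τ * κ τ ξ = 0)
    (hdead : ∀ τ ∉ T, (∀ η, κ η τ = 0) ∨ (∀ ξ, κ τ ξ = 0)) (η ξ : S) :
    ∑ τ, restrictKappa κ T η τ * restrictKappa κ T τ ξ = 0 := by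
  by_cases hηξ : η ∈ T ∧ ξ ∈ T
  · rw [← hdsq η ξ]
    refine Finset.sum_congr rfl fun τ _ => ?_
    by_cases hτ : τ ∈ T
    · rw [restrictKappa_of_mem hηξ.1 hτ, restrictKappa_of_mem hτ hηξ.2]
    · rw [restrictKappa, if_neg (fun h => hτ h.2)]
      rcases hdead τ hτ with h | h <;> simp [h]
  · refine Finset.sum_eq_zero fun τ _ => ?_
    by_cases hη : η ∈ T
    · rw [show restrictKappa κ T τ ξ = 0 from if_neg (fun h => hηξ ⟨hη, h.2⟩), mul_zero]
    · rw [restrictKappa, if_neg (fun h => hη h.1), zero_mul]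

end Restriction

section FilteredReduction

variable {R S : Type*} [CommRing R] {κ : S → S → R} {m : S → S} {a : S}

def FaceClosed (κ : S → S → R) (K : Set S) : Prop :=
  ∀ η ∈ K, ∀ ξ, κ η ξ ≠ 0 → ξ ∈ K

theorem FaceClosed.reduceOne {K : Set S} (hK : FaceClosed κ K) (hmK : a ∈ K → m a ∈ K) :
    FaceClosed (reduceOne m a κ) K := by
  intro η hη ξ h
  rcases reduceOne_ne_zero h with h | ⟨ha, hb⟩
  · exact hK η hη ξ h
  · exact hK _ (hmK (hK η hη a ha)) ξ hb

theorem pairAdapted_restrictKappa [Fintype S] [DecidableEq S] {dim : S → ℕ} {K T : Set S}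
    (hdim : ∀ η ξ, κ η ξ ≠ 0 → dim η = dim ξ + 1) (hK : FaceClosed κ K)
    (hmK : a ∈ K → m a ∈ K) (hma : dim (m a) = dim a + 1) (hb : m a ∈ T) (q : ℕ) :
    PairAdapted (restrictKappa κ T) m a ((K ∩ T) ∩ {σ | dim σ = q}) where
  mem_of_coface η hη h := by
    obtain ⟨-, -, hκ⟩ := restrictKappa_ne_zero h
    have := hdim η a hκ
    exact ⟨⟨hmK (hK η hη.1.1 a hκ), hb⟩, by simp_all⟩
  face_mem ha ξ h := by
    obtain ⟨-, hξT, hκ⟩ := restrictKappa_ne_zero h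
    have := hdim _ ξ hκ
    exact ⟨⟨hK _ (hmK ha.1.1) ξ hκ, hξT⟩, by simp_all⟩

theorem nonempty_persHom_restrictKappa_equiv_reduceOne [Fintype S] [DecidableEq S]
    [Nontrivial R] {dim : S → ℕ} {K L T : Set S}
    (hdsq : ∀ η ξ, ∑ τ, κ η τ * κ τ ξ = 0) (hdim : ∀ η ξ, κ η ξ ≠ 0 → dim η = dim ξ + 1)
    (hK : FaceClosed κ K) (hL : FaceClosed κ L) (hKL : K ⊆ L)
    (hmK : a ∈ K → m a ∈ K) (hmL : a ∈ L → m a ∈ L)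
    (hu : IsUnit (κ (m a) a)) (hne : a ≠ m a) (ha : a ∈ T) (hb : m a ∈ T)
    (hdead : ∀ τ ∉ T, (∀ η, κ η τ = 0) ∨ (∀ ξ, κ τ ξ = 0)) (q : ℕ) :
    Nonempty (persHom (restrictKappa κ T)
        ((K ∩ T) ∩ {σ | dim σ = q}) ((L ∩ T) ∩ {σ | dim σ = q + 1}) ≃ₗ[R]
      persHom (restrictKappa (reduceOne m a κ) (T \ {a, m a}))
        ((K ∩ (T \ {a, m a})) ∩ {σ | dim σ = q})
        ((L ∩ (T \ {a, m a})) ∩ {σ | dim σ = q + 1})) := by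
  have hma : dim (m a) = dim a + 1 := hdim _ _ hu.ne_zero
  have hdiff (J : Set S) (p : ℕ) : ((J ∩ T) ∩ {σ | dim σ = p}) \ {a, m a} =
      (J ∩ (T \ {a, m a})) ∩ {σ | dim σ = p} := by
    ext σ
    simp only [Set.mem_sdiff, Set.mem_inter_iff]
    tauto
  rw [← restrictKappa_reduceOne_restrictKappa ha hb, ← hdiff, ← hdiff]
  refine nonempty_persHom_equiv_reduceOne (restrictKappa_dsq hdsq hdead)
    (by rwa [restrictKappa_of_mem hb ha]) hne
    (pairAdapted_restrictKappa hdim hK hmK hma hb q)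
    (pairAdapted_restrictKappa hdim hL hmL hma hb (q + 1)) ?_
  rintro ⟨⟨haK, -⟩, hq⟩
  exact ⟨⟨hmL (hKL haK), hb⟩, by simp_all⟩

end FilteredReduction

theorem Relation.TransGen.exists_seq {α : Type*} {r : α → α → Prop} {x y : α}
    (h : Relation.TransGen r x y) :
    ∃ (p : ℕ) (σ : ℕ → α), σ 0 = x ∧ σ (p + 1) = y ∧ ∀ i ≤ p, r (σ i) (σ (i + 1)) := by
  induction h using Relation.TransGen.head_induction_on with
  | @single x hxy => exact ⟨0, fun i => if i = 0 then x else y, rfl, rfl, by simpa using hxy⟩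
  | @head x z hxz _ ih =>
    obtain ⟨p, σ, h0, hp, hσ⟩ := ih
    refine ⟨p + 1, fun i => if i = 0 then x else σ (i - 1), rfl, by simpa using hp, ?_⟩
    rintro (_ | i) hi
    · simpa [h0] using hxz
    · simpa using hσ i (by omega)

section Matching

variable {R S : Type*} [CommRing R] [Fintype S] [DecidableEq S] {X : SComplex R S}

def PartialMatching.VPathStep (M : PartialMatching X) (τ σ : S) : Prop :=
  τ ∈ M.A ∧ σ ∈ M.A ∧ σ ≠ τ ∧ X.κ (M.m τ) σ ≠ 0

def PartialMatching.remainingCells (M : PartialMatching X) (l : List S) : Set S :=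
  M.C ∪ {x | ∃ c ∈ l, x = c ∨ x = M.m c}

variable {M : PartialMatching X}

theorem PartialMatching.Acyclic.not_transGen (hac : M.Acyclic) (x : S) :
    ¬ Relation.TransGen M.VPathStep x x := by
  intro h
  obtain ⟨p, σ, h0, hp, hσ⟩ := h.exists_seq
  exact hac ⟨p, σ, fun i hi => (hσ i hi).1, hp.trans h0.symm, fun i hi => (hσ i hi).2.2⟩

theorem PartialMatching.remainingCells_nil : M.remainingCells [] = M.C := by
  simp [PartialMatching.remainingCells]

theorem PartialMatching.mem_remainingCells_cons {a x : S} {t : List S} :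
    x ∈ M.remainingCells (a :: t) ↔ x = a ∨ x = M.m a ∨ x ∈ M.remainingCells t := by
  simp only [PartialMatching.remainingCells, Set.mem_union, Set.mem_ofPred_eq, List.mem_cons,
    exists_eq_or_imp]
  rw [or_assoc, or_left_comm]
  exact or_congr_right or_left_comm

theorem PartialMatching.remainingCells_eq_univ {l : List S} (hl : ∀ c ∈ M.A, c ∈ l) :
    M.remainingCells l = Set.univ := by
  refine Set.eq_univ_of_forall fun x => ?_
  have hx : x ∈ M.A ∪ M.B ∪ M.C := M.cover ▸ Set.mem_univ x
  rcases hx with (hA | hB) | hC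
  · exact Or.inr ⟨x, hl x hA, Or.inl rfl⟩
  · obtain ⟨c, hcA, rfl⟩ := M.bij.surjOn hB
    exact Or.inr ⟨c, hl c hcA, Or.inr rfl⟩
  · exact Or.inl hC

theorem PartialMatching.remainingCells_cons_sdiff {a : S} {t : List S} (haA : a ∈ M.A)
    (htA : ∀ c ∈ t, c ∈ M.A) (hat : a ∉ t) :
    M.remainingCells (a :: t) \ {a, M.m a} = M.remainingCells t := by
  have hbB : M.m a ∈ M.B := M.bij.mapsTo haA
  have ha : a ∉ M.remainingCells t := by
    rintro (h | ⟨c, hc, rfl | rfl⟩)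
    · exact Set.disjoint_left.1 M.disjAC haA h
    · exact hat hc
    · exact Set.disjoint_left.1 M.disjAB haA (M.bij.mapsTo (htA c hc))
  have hb : M.m a ∉ M.remainingCells t := by
    rintro (h | ⟨c, hc, h | h⟩)
    · exact Set.disjoint_left.1 M.disjBC hbB h
    · exact Set.disjoint_left.1 M.disjAB (htA c hc) (h ▸ hbB)
    · exact hat (M.bij.injOn haA (htA c hc) h ▸ hc)
  ext x
  simp only [Set.mem_sdiff, PartialMatching.mem_remainingCells_cons, Set.mem_insert_iff,
    Set.mem_singleton_iff]
  constructor
  · rintro ⟨h | h | h, hx⟩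
    exacts [absurd (Or.inl h) hx, absurd (Or.inr h) hx, h]
  · intro hx
    refine ⟨Or.inr (Or.inr hx), ?_⟩
    rintro (rfl | rfl)
    exacts [ha hx, hb hx]

variable (M) in
structure ReductionInvariant {ι : Type*} (F : ι → Set S) (κ : S → S → R) (l : List S) :
    Prop where
  dsq : ∀ η ξ, ∑ τ, κ η τ * κ τ ξ = 0
  dim_rule : ∀ η ξ, κ η ξ ≠ 0 → X.dim η = X.dim ξ + 1
  faceClosed : ∀ γ, FaceClosed κ (F γ)
  isUnit : ∀ c ∈ l, IsUnit (κ (M.m c) c)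
  transGen : ∀ τ ∈ M.A, ∀ σ ∈ M.A, σ ≠ τ → κ (M.m τ) σ ≠ 0 →
    Relation.TransGen M.VPathStep τ σ
  dead : ∀ τ ∉ M.remainingCells l, (∀ η, κ η τ = 0) ∨ (∀ ξ, κ τ ξ = 0)

variable {ι : Type*} {F : ι → Set S}

theorem reductionInvariant_init {l : List S} (hface : ∀ γ, FaceClosed X.κ (F γ))
    (hlA : ∀ c, c ∈ l ↔ c ∈ M.A) : ReductionInvariant M F X.κ l where
  dsq := X.dsq
  dim_rule := X.dim_rule
  faceClosed := hface
  isUnit c hc := M.unit c ((hlA c).1 hc)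
  transGen _ hτ _ hσ hne h := .single ⟨hτ, hσ, hne, h⟩
  dead τ hτ := absurd (M.remainingCells_eq_univ (fun c => (hlA c).2) ▸ Set.mem_univ τ) hτ

theorem ReductionInvariant.reduceOne [Nontrivial R] {κ : S → S → R} {a : S} {t : List S}
    (hinv : ReductionInvariant M F κ (a :: t)) (hac : M.Acyclic)
    (hcompat : ∀ γ, ∀ σ ∈ M.A, σ ∈ F γ → M.m σ ∈ F γ)
    (haA : a ∈ M.A) (htA : ∀ c ∈ t, c ∈ M.A) (hat : a ∉ t) :
    ReductionInvariant M F (reduceOne M.m a κ) t where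
  dsq := reduceOne_dsq hinv.dsq
  dim_rule η ξ h := by
    have hu := hinv.isUnit a List.mem_cons_self
    have := hinv.dim_rule _ _ hu.ne_zero
    rcases reduceOne_ne_zero h with h | ⟨h₁, h₂⟩
    · exact hinv.dim_rule η ξ h
    · have := hinv.dim_rule _ _ h₁
      have := hinv.dim_rule _ _ h₂
      omega
  faceClosed γ := (hinv.faceClosed γ).reduceOne (hcompat γ a haA)
  isUnit c hc := by
    have hca : c ≠ a := fun h => hat (h ▸ hc)
    have hcross : κ (M.m c) a * κ (M.m a) c = 0 := by
      by_contra h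
      exact hac.not_transGen c
        ((hinv.transGen c (htA c hc) a haA hca.symm (left_ne_zero_of_mul h)).trans
          (hinv.transGen a haA c (htA c hc) hca (right_ne_zero_of_mul h)))
    have hκ : _root_.reduceOne M.m a κ (M.m c) c = κ (M.m c) c := by
      rw [_root_.reduceOne, mul_right_comm, hcross, zero_mul, sub_zero]
    exact hκ ▸ hinv.isUnit c (List.mem_cons_of_mem a hc)
  transGen τ hτ σ hσ hne h := by
    have hu := hinv.isUnit a List.mem_cons_self
    have hτa : τ ≠ a := by
      rintro rfl
      exact h (reduceOne_apply_left hu σ)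
    have hσa : σ ≠ a := by
      rintro rfl
      exact h (reduceOne_apply_right hu _)
    rcases reduceOne_ne_zero h with h | ⟨h₁, h₂⟩
    · exact hinv.transGen τ hτ σ hσ hne h
    · exact (hinv.transGen τ hτ a haA hτa.symm h₁).trans (hinv.transGen a haA σ hσ hσa h₂)
  dead τ hτ := by
    have hu := hinv.isUnit a List.mem_cons_self
    by_cases hτa : τ = a
    · subst hτa
      exact Or.inl (reduceOne_apply_right hu)
    by_cases hτb : τ = M.m a
    · subst hτb
      exact Or.inr (reduceOne_apply_left hu)
    rcases hinv.dead τ (by simp [PartialMatching.mem_remainingCells_cons, hτa, hτb, hτ])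
      with h | h
    · exact Or.inl (reduceOne_apply_of_forall_left_eq_zero h)
    · exact Or.inr (reduceOne_apply_of_forall_right_eq_zero h)

theorem nonempty_persHom_equiv_reduceList [Nontrivial R] (hac : M.Acyclic)
    (hcompat : ∀ γ, ∀ σ ∈ M.A, σ ∈ F γ → M.m σ ∈ F γ) {α β : ι} (hαβ : F α ⊆ F β) (q : ℕ) :
    ∀ (l : List S) (κ : S → S → R), l.Nodup → (∀ c ∈ l, c ∈ M.A) →
      ReductionInvariant M F κ l →
      Nonempty (persHom (restrictKappa κ (M.remainingCells l))
          ((F α ∩ M.remainingCells l) ∩ {σ | X.dim σ = q})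
          ((F β ∩ M.remainingCells l) ∩ {σ | X.dim σ = q + 1}) ≃ₗ[R]
        persHom (restrictKappa (reduceList M.m l κ) M.C)
          ((F α ∩ M.C) ∩ {σ | X.dim σ = q}) ((F β ∩ M.C) ∩ {σ | X.dim σ = q + 1}))
  | [], κ, _, _, _ => by
    rw [PartialMatching.remainingCells_nil]
    exact ⟨LinearEquiv.refl R _⟩
  | a :: t, κ, hnd, hA, hinv => by
    have haA := hA a List.mem_cons_self
    have htA (c : S) (hc : c ∈ t) : c ∈ M.A := hA c (List.mem_cons_of_mem a hc)
    have hat : a ∉ t := (List.nodup_cons.1 hnd).1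
    have hne : a ≠ M.m a := fun h => Set.disjoint_left.1 M.disjAB haA (h ▸ M.bij.mapsTo haA)
    obtain ⟨E⟩ := nonempty_persHom_restrictKappa_equiv_reduceOne hinv.dsq hinv.dim_rule
      (hinv.faceClosed α) (hinv.faceClosed β) hαβ (hcompat α a haA) (hcompat β a haA)
      (hinv.isUnit a List.mem_cons_self) hne
      (PartialMatching.mem_remainingCells_cons.2 (Or.inl rfl))
      (PartialMatching.mem_remainingCells_cons.2 (Or.inr (Or.inl rfl))) hinv.dead q
    rw [PartialMatching.remainingCells_cons_sdiff haA htA hat] at E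
    obtain ⟨E'⟩ := nonempty_persHom_equiv_reduceList hac hcompat hαβ q t _
      (List.nodup_cons.1 hnd).2 htA (hinv.reduceOne hac hcompat haA htA hat)
    exact ⟨E.trans E'⟩

end Matching

theorem stmt18_general {R S : Type*} [CommRing R] [IsDomain R]
    [Fintype S] [DecidableEq S] {k : ℕ} (X : SComplex R S) (M : PartialMatching X)
    (hac : M.Acyclic)
    (F : (Fin k → ℝ) → Set S)
    (hmono : ∀ α β : Fin k → ℝ, α ≤ β → F α ⊆ F β)
    (hface : ∀ (α : Fin k → ℝ) (σ τ : S), σ ∈ F α → X.κ σ τ ≠ 0 → τ ∈ F α)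
    (hcompat : ∀ (α : Fin k → ℝ), ∀ σ ∈ M.A, σ ∈ F α → M.m σ ∈ F α)
    (l : List S) (hnd : l.Nodup) (hlA : ∀ a : S, a ∈ l ↔ a ∈ M.A) :
    ∀ (α β : Fin k → ℝ), α ≤ β → ∀ q : ℕ,
      Nonempty
        (persHom X.κ (F α ∩ {σ | X.dim σ = q}) (F β ∩ {σ | X.dim σ = q + 1}) ≃ₗ[R]
          persHom (restrictKappa (reduceList M.m l X.κ) M.C)
            ((F α ∩ M.C) ∩ {σ | X.dim σ = q})
            ((F β ∩ M.C) ∩ {σ | X.dim σ = q + 1})) := by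
  intro α β hαβ q
  have hinv : ReductionInvariant M F X.κ l :=
    reductionInvariant_init (fun γ η hη ξ h => hface γ η ξ hη h) hlA
  obtain ⟨E⟩ := nonempty_persHom_equiv_reduceList hac hcompat (hmono α β hαβ) q l X.κ hnd
    (fun c => (hlA c).1) hinv
  rw [M.remainingCells_eq_univ (fun c => (hlA c).2), restrictKappa_univ, Set.inter_univ,
    Set.inter_univ] at E
  exact ⟨E⟩

/-- performing the successive reductions at all the matched pairs
`(m (A i), A i)`, `A = {A 1, …, A n}` enumerated by the list `l`, yields a final
complex with underlying set `C`, and for every `α ⪯ β` and every `q` the `q`-th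
persistent homology of `S` is isomorphic to that of `C` (with the filtration induced
by intersection). -/
theorem stmt18 {R S : Type*} [CommRing R] [IsDomain R] [IsPrincipalIdealRing R]
    [Fintype S] [DecidableEq S] {k : ℕ} (X : SComplex R S) (M : PartialMatching X)
    (hac : M.Acyclic)
    (F : (Fin k → ℝ) → Set S)
    (hmono : ∀ α β : Fin k → ℝ, α ≤ β → F α ⊆ F β)
    (hface : ∀ (α : Fin k → ℝ) (σ τ : S), σ ∈ F α → X.κ σ τ ≠ 0 → τ ∈ F α)
    (hcompat : ∀ (α : Fin k → ℝ), ∀ σ ∈ M.A, σ ∈ F α → M.m σ ∈ F α)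
    (l : List S) (hnd : l.Nodup) (hlA : ∀ a : S, a ∈ l ↔ a ∈ M.A) :
    ∀ (α β : Fin k → ℝ), α ≤ β → ∀ q : ℕ,
      Nonempty
        (persHom X.κ (F α ∩ {σ | X.dim σ = q}) (F β ∩ {σ | X.dim σ = q + 1}) ≃ₗ[R]
          persHom (restrictKappa (reduceList M.m l X.κ) M.C)
            ((F α ∩ M.C) ∩ {σ | X.dim σ = q})
            ((F β ∩ M.C) ∩ {σ | X.dim σ = q + 1})) :=
  stmt18_general X M hac F hmono hface hcompat l hnd hlA
end
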